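/- arXiv:1109.3006 — 2 statements merged into one kernel-verified Lean document; each statement's English description precedes it below -/
import Mathlib

section
/- Let q be an integer ≥ 2, and for n ≥ 1 write n in base q as n = n_w q^w + ... + n_1 q + n_0 with n_w ≠ 0. For an integer l ≥ 0 set s(n,l) = n_w + ... + n_{l+1} and t(n,l) = n_l q^l + ... + n_1 q + n_0. Then ∑_{i ≥ l+1} ⌊n/q^i⌋ = (n − t(n,l) − q^l · s(n,l)) / (q − 1) · q^{-l}, i.e. (q−1)·q^l·∑_{i≥l+1}⌊n/q^i⌋ = n − t(n,l) − q^l·s(n,l). -/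
/-!
Writing `a_i = ⌊n / q^i⌋`, the digit in position `i` is `d_i = a_i mod q`, and division with
remainder `a_i = q a_{i+1} + d_i` reads `(q - 1) a_i + d_i = q (a_i - a_{i+1})`. Summed over
`l < i ≤ n` this telescopes to `q a_{l+1}`, since `a_{n+1} = 0`; multiplying by `q^l` and using
`n = q^{l+1} a_{l+1} + t(n,l)` gives the claim.
-/

open Finset

lemma sub_one_mul_div_pow_add_digit (q n i : ℕ) :
    ((q : ℤ) - 1) * ((n / q ^ i : ℕ) : ℤ) + (((n / q ^ i) % q : ℕ) : ℤ) =
      (q : ℤ) * (((n / q ^ i : ℕ) : ℤ) - ((n / q ^ (i + 1) : ℕ) : ℤ)) := by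
  have hdiv : (q : ℤ) * ((n / q ^ (i + 1) : ℕ) : ℤ) + (((n / q ^ i) % q : ℕ) : ℤ) =
      ((n / q ^ i : ℕ) : ℤ) := by
    rw [pow_succ, ← Nat.div_div_eq_div_mul]
    exact_mod_cast Nat.div_add_mod (n / q ^ i) q
  linear_combination hdiv

lemma sub_one_mul_sum_div_pow_add_sum_digits (q n : ℕ) {l N : ℕ} (hlN : l ≤ N) :
    ((q : ℤ) - 1) * (∑ i ∈ Icc (l + 1) N, ((n / q ^ i : ℕ) : ℤ)) +
        ∑ i ∈ Icc (l + 1) N, (((n / q ^ i) % q : ℕ) : ℤ) =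
      (q : ℤ) * (((n / q ^ (l + 1) : ℕ) : ℤ) - ((n / q ^ (N + 1) : ℕ) : ℤ)) := by
  set a : ℕ → ℤ := fun i ↦ ((n / q ^ i : ℕ) : ℤ)
  calc ((q : ℤ) - 1) * (∑ i ∈ Icc (l + 1) N, a i) +
        ∑ i ∈ Icc (l + 1) N, (((n / q ^ i) % q : ℕ) : ℤ)
      = ∑ i ∈ Ico (l + 1) (N + 1),
          (((q : ℤ) - 1) * a i + (((n / q ^ i) % q : ℕ) : ℤ)) := by
        rw [mul_sum, ← sum_add_distrib, Ico_add_one_right_eq_Icc]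
    _ = ∑ i ∈ Ico (l + 1) (N + 1), -((q : ℤ) * (a (i + 1) - a i)) :=
        sum_congr rfl fun i _ ↦ by rw [sub_one_mul_div_pow_add_digit, ← mul_neg, neg_sub]
    _ = (q : ℤ) * (a (l + 1) - a (N + 1)) := by
        rw [sum_neg_distrib, ← mul_sum, sum_Ico_sub a (by omega), ← mul_neg, neg_sub]

lemma div_pow_succ_self_eq_zero {q : ℕ} (hq : 1 < q) (n : ℕ) : n / q ^ (n + 1) = 0 :=
  Nat.div_eq_of_lt <| (Nat.lt_pow_self hq).trans <| Nat.pow_lt_pow_succ hq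

theorem stmt7_general (q n l : ℕ) (hq : 2 ≤ q) :
    ((q : ℤ) - 1) * (q : ℤ) ^ l * (∑ i ∈ Finset.Icc (l + 1) n, ((n / q ^ i : ℕ) : ℤ)) =
      (n : ℤ) - ((n % q ^ (l + 1) : ℕ) : ℤ) -
        (q : ℤ) ^ l * ∑ i ∈ Finset.Icc (l + 1) n, (((n / q ^ i) % q : ℕ) : ℤ) := by
  rcases le_or_gt l n with hln | hnl
  · have htelescope := sub_one_mul_sum_div_pow_add_sum_digits q n hln
    rw [div_pow_succ_self_eq_zero hq, Nat.cast_zero, sub_zero] at htelescope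
    have hdiv : (q : ℤ) ^ (l + 1) * ((n / q ^ (l + 1) : ℕ) : ℤ) +
        ((n % q ^ (l + 1) : ℕ) : ℤ) = (n : ℤ) := by
      exact_mod_cast Nat.div_add_mod n (q ^ (l + 1))
    linear_combination (q : ℤ) ^ l * htelescope + hdiv
  · have hlt : n < q ^ (l + 1) :=
      hnl.trans <| (Nat.lt_pow_self (by omega)).trans <| Nat.pow_lt_pow_succ (by omega)
    simp [Icc_eq_empty_of_lt (by omega : n < l + 1), Nat.mod_eq_of_lt hlt]

/-- for `q ≥ 2`, `n ≥ 1`, `l ≥ 0`, writing `t(n,l) = n % q^(l+1)`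
and `s(n,l) = ∑_{i ≥ l+1} digit_i(n)`, one has
`(q-1)·q^l·∑_{i ≥ l+1} ⌊n/q^i⌋ = n - t(n,l) - q^l·s(n,l)`. -/
theorem stmt7 (q n l : ℕ) (hq : 2 ≤ q) (hn : 1 ≤ n) :
    ((q : ℤ) - 1) * (q : ℤ) ^ l * (∑ i ∈ Finset.Icc (l + 1) n, ((n / q ^ i : ℕ) : ℤ)) =
      (n : ℤ) - ((n % q ^ (l + 1) : ℕ) : ℤ) -
        (q : ℤ) ^ l * ∑ i ∈ Finset.Icc (l + 1) n, (((n / q ^ i) % q : ℕ) : ℤ) :=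
  stmt7_general q n l hq
end

section
/- Let K be a complete nonarchimedean field with ring of integers O = F_q[[π]] and residue field F_q, where |π| = 1/q. Fix an open compact subset S of K and an integer h ≥ 0. Suppose μ assigns to each closed ball B_a(|π|^l) ⊆ S (for all sufficiently large l) and each integer j with 0 ≤ j ≤ h a value ∫_{B_a(|π|^l)} (x−a)^j dμ ∈ C satisfying |∫_{B_a(|π|^l)} (x−a)^j dμ| ≤ C·|π|^{l(j−h)} for a constant C depending only on μ, and μ is finitely additive and compatible with binomial re-expansion. Then for every f of class C^h on S (in the sense of Schikhof difference quotients), the Riemann sums R_l(f,μ,{a_{l,i}}) = ∑_i ∑_{j=0}^h D_j f(a_{l,i}) ∫_{B_i(|π|^l)} (x−a_{l,i})^j dμ converge as l → ∞, and the limit is independent of the choice of sample points a_{l,i} in each ball. -/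
/-!
Let `R_l` be the Riemann sum at level `l` with the centers of the balls as sample points.
Re-expanding the moments of a ball around a nearby point (binomial recentering) turns the
difference between two Riemann sums, ball by ball, into `∑_k (T_k - D_k) · mom_k`, where `T_k` is
the Taylor polynomial of `D_k`. The `C^h` Taylor bound `ε r^(h-k)` cancels the admissibility
growth `r^(k-h)` of the `k`-th moment, so each ball contributes at most `ε · const`, and by the
ultrametric inequality so does the whole sum, however many balls there are. Applied to a ball and
its children (finite additivity) this gives `R_(l+1) - R_l → 0`, hence `R_l` is Cauchy in the
nonarchimedean field; applied to a ball and a sample point in it, it shows that any Riemann sum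
has the same limit as `R_l`.
-/

open Classical

open Finset Filter Topology Metric

theorem sum_mul_sum_choose_mul_eq {R : Type*} [CommRing R] (n : ℕ) (g M : ℕ → R) (c : R) :
    ∑ j ∈ range (n + 1), g j * ∑ k ∈ range (j + 1), (j.choose k : R) * c ^ (j - k) * M k
      = ∑ k ∈ range (n + 1),
          (∑ i ∈ range (n - k + 1), ((i + k).choose k : R) * c ^ i * g (i + k)) * M k := by
  set F : ℕ → ℕ → R := fun k i => ((i + k).choose k : R) * c ^ i * g (i + k) * M k
  have hdiag : ∀ j ∈ range (n + 1),
      g j * ∑ k ∈ range (j + 1), (j.choose k : R) * c ^ (j - k) * M k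
        = ∑ k ∈ range (j + 1), F k (j - k) := by
    intro j _
    rw [mul_sum]
    refine sum_congr rfl fun k hk => ?_
    simp only [F, Nat.sub_add_cancel (Nat.lt_succ_iff.mp (mem_range.mp hk))]
    ring
  rw [sum_congr rfl hdiag, sum_range_diag_flip]
  refine sum_congr rfl fun k hk => ?_
  rw [sum_mul, Nat.sub_add_comm (Nat.lt_succ_iff.mp (mem_range.mp hk))]

theorem Finset.sum_eq_sum_sum_filter_mem {ι α M : Type*} [AddCommMonoid M] [DecidableEq α]
    {A : Finset ι} {B : Finset α} {U : ι → Set α} [∀ a, DecidablePred (· ∈ U a)]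
    (hB : ∀ b ∈ B, ∃ a ∈ A, b ∈ U a) (hU : (A : Set ι).PairwiseDisjoint U) (g : α → M) :
    ∑ b ∈ B, g b = ∑ a ∈ A, ∑ b ∈ B.filter (· ∈ U a), g b := by
  rw [← sum_biUnion]
  · congr 1
    ext b
    simp only [mem_biUnion, mem_filter]
    exact ⟨fun hb => (hB b hb).imp fun a ha => ⟨ha.1, hb, ha.2⟩, fun ⟨_, _, hb, _⟩ => hb⟩
  · intro a ha a' ha' hne
    simp only [Function.onFun, disjoint_left, mem_filter]
    exact fun b hb hb' => Set.disjoint_left.mp (hU ha ha' hne) hb.2 hb'.2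

theorem tendsto_zero_of_forall_eventually_norm_le_mul {α E : Type*} [SeminormedAddGroup E]
    {l : Filter α} {g : α → E} (C : ℝ) (H : ∀ ε > 0, ∀ᶠ n in l, ‖g n‖ ≤ ε * C) :
    Tendsto g l (𝓝 0) := by
  refine NormedAddGroup.tendsto_nhds_zero.2 fun ε hε => ?_
  have hε' : 0 < ε / (|C| + 1) := by positivity
  filter_upwards [H _ hε'] with n hn
  calc ‖g n‖ ≤ ε / (|C| + 1) * C := hn
    _ ≤ ε / (|C| + 1) * |C| := mul_le_mul_of_nonneg_left (le_abs_self C) hε'.le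
    _ < ε / (|C| + 1) * (|C| + 1) := mul_lt_mul_of_pos_left (lt_add_one _) hε'
    _ = ε := div_mul_cancel₀ _ (by positivity)

section Taylor

variable {R : Type*} [NormedCommRing R]

/-- When the `D j` are the hyperderivatives of a function, `(j + k).choose k * D (j + k)` is the
`j`-th hyperderivative of `D k`, so this is the Taylor polynomial of `D k` of order `n - k` at `y`,
evaluated at `x`. -/
def taylorPoly (D : ℕ → R → R) (n k : ℕ) (y x : R) : R :=
  ∑ j ∈ range (n - k + 1), ((j + k).choose k : R) * (x - y) ^ j * D (j + k) y

theorem eventually_norm_sub_taylorPoly_le {D : ℕ → R → R} {n : ℕ} {S : Set R} {r : ℕ → ℝ}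
    (hr : Tendsto r atTop (𝓝 0))
    (hT : ∀ k ≤ n, ∀ ε > (0 : ℝ), ∃ δ > (0 : ℝ), ∀ x ∈ S, ∀ y ∈ S, ‖x - y‖ ≤ δ →
      ‖D k x - taylorPoly D n k y x‖ ≤ ε * ‖x - y‖ ^ (n - k))
    {ε : ℝ} (hε : 0 < ε) :
    ∀ᶠ l in atTop, ∀ k ≤ n, ∀ x ∈ S, ∀ y ∈ S, ‖x - y‖ ≤ r l →
      ‖D k x - taylorPoly D n k y x‖ ≤ ε * ‖x - y‖ ^ (n - k) := by
  have hk : ∀ k ∈ range (n + 1), ∀ᶠ l in atTop, ∀ x ∈ S, ∀ y ∈ S, ‖x - y‖ ≤ r l →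
      ‖D k x - taylorPoly D n k y x‖ ≤ ε * ‖x - y‖ ^ (n - k) := by
    intro k hk
    obtain ⟨δ, hδ, H⟩ := hT k (Nat.lt_succ_iff.mp (mem_range.mp hk)) ε hε
    filter_upwards [hr.eventually_lt_const hδ] with l hl x hx y hy hxy
    exact H x hx y hy (hxy.trans hl.le)
  filter_upwards [(eventually_all_finset _).2 hk] with l hl k hkn
  exact hl k (mem_range.mpr (Nat.lt_succ_of_le hkn))

end Taylor

section Ultrametric

variable {R : Type*} [NormedCommRing R] [IsUltrametricDist R] {D : ℕ → R → R} {n : ℕ}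

theorem norm_sum_mul_recenter_sub_le {x y : R} {M M' : ℕ → R} {ε C ρ c : ℝ}
    (hrec : ∀ j ≤ n, M' j = ∑ k ∈ range (j + 1), (j.choose k : R) * (x - y) ^ (j - k) * M k)
    (hT : ∀ k ≤ n, ‖D k x - taylorPoly D n k y x‖ ≤ ε * ‖x - y‖ ^ (n - k))
    (hM : ∀ k ≤ n, ‖M k‖ ≤ C * ρ ^ ((k : ℤ) - n))
    (hε : 0 ≤ ε) (hρ : 0 < ρ) (hc : 1 ≤ c) (hxy : ‖x - y‖ ≤ c * ρ) :
    ‖∑ j ∈ range (n + 1), D j y * M' j - ∑ k ∈ range (n + 1), D k x * M k‖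
      ≤ ε * (max C 0 * c ^ n) := by
  have hexpand : ∑ j ∈ range (n + 1), D j y * M' j
      = ∑ k ∈ range (n + 1), taylorPoly D n k y x * M k := by
    rw [sum_congr rfl fun j hj => by rw [hrec j (Nat.lt_succ_iff.mp (mem_range.mp hj))]]
    exact sum_mul_sum_choose_mul_eq n (fun j => D j y) M (x - y)
  rw [hexpand, ← sum_sub_distrib]
  refine IsUltrametricDist.norm_sum_le_of_forall_le_of_nonneg (by positivity) fun k hk => ?_
  have hkn : k ≤ n := Nat.lt_succ_iff.mp (mem_range.mp hk)
  have hzpow : ρ ^ ((k : ℤ) - n) = (ρ ^ (n - k))⁻¹ := by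
    rw [← zpow_natCast, ← zpow_neg, Nat.cast_sub hkn, neg_sub]
  have hratio : ‖x - y‖ / ρ ≤ c := (div_le_iff₀ hρ).2 hxy
  rw [← sub_mul]
  calc ‖(taylorPoly D n k y x - D k x) * M k‖
      ≤ ‖taylorPoly D n k y x - D k x‖ * ‖M k‖ := norm_mul_le _ _
    _ ≤ (ε * ‖x - y‖ ^ (n - k)) * (max C 0 * ρ ^ ((k : ℤ) - n)) := by
      rw [norm_sub_rev]
      exact mul_le_mul (hT k hkn) ((hM k hkn).trans
        (mul_le_mul_of_nonneg_right (le_max_left _ _) (by positivity)))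
        (norm_nonneg _) (by positivity)
    _ = ε * max C 0 * (‖x - y‖ / ρ) ^ (n - k) := by
      rw [hzpow, div_pow]
      ring
    _ ≤ ε * max C 0 * c ^ n := by
      gcongr
      exact (pow_le_pow_left₀ (by positivity) hratio _).trans
        (pow_le_pow_right₀ hc (Nat.sub_le n k))
    _ = ε * (max C 0 * c ^ n) := mul_assoc _ _ _

theorem norm_riemannSum_sub_le {S : Set R} {A : Finset R} {M : R → ℕ → R} {s : R → R}
    {ε C ρ : ℝ} (hε : 0 ≤ ε) (hρ : 0 < ρ)
    (hA : S = ⋃ a ∈ A, closedBall a ρ) (hs : ∀ a ∈ A, s a ∈ closedBall a ρ)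
    (hrec : ∀ y x : R, ‖x - y‖ ≤ ρ → ∀ j ≤ n,
      M y j = ∑ k ∈ range (j + 1), (j.choose k : R) * (x - y) ^ (j - k) * M x k)
    (hT : ∀ k ≤ n, ∀ x ∈ S, ∀ y ∈ S, ‖x - y‖ ≤ ρ →
      ‖D k x - taylorPoly D n k y x‖ ≤ ε * ‖x - y‖ ^ (n - k))
    (hM : ∀ a ∈ S, ∀ k ≤ n, ‖M a k‖ ≤ C * ρ ^ ((k : ℤ) - n)) :
    ‖∑ a ∈ A, ∑ j ∈ range (n + 1), D j (s a) * M (s a) j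
      - ∑ a ∈ A, ∑ j ∈ range (n + 1), D j a * M a j‖ ≤ ε * max C 0 := by
  rw [← sum_sub_distrib]
  refine IsUltrametricDist.norm_sum_le_of_forall_le_of_nonneg (by positivity) fun a ha => ?_
  have hball : closedBall a ρ ⊆ S := hA ▸ Set.subset_biUnion_of_mem (u := (closedBall · ρ)) ha
  have haS : a ∈ S := hball (mem_closedBall_self hρ.le)
  have hsa : ‖a - s a‖ ≤ ρ := by rw [← dist_eq_norm, dist_comm]; exact hs a ha
  simpa using norm_sum_mul_recenter_sub_le (hrec (s a) a hsa)
    (fun k hk => hT k hk a haS (s a) (hball (hs a ha)) hsa) (hM a haS) hε hρ le_rfl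
    (by rwa [one_mul])

theorem norm_riemannSum_refine_sub_le {S : Set R} {A B : Finset R} {M N : R → ℕ → R}
    {ε C r ρ c : ℝ} (hε : 0 ≤ ε) (hρ : 0 < ρ) (hc : 1 ≤ c) (hrρ : r ≤ c * ρ)
    (hA : S = ⋃ a ∈ A, closedBall a r) (hB : S = ⋃ b ∈ B, closedBall b ρ)
    (hdisj : ∀ a ∈ A, ∀ a' ∈ A, a ≠ a' → Disjoint (closedBall a r) (closedBall a' r))
    (hadd : ∀ a ∈ A, ∀ j ≤ n,
      M a j = ∑ b ∈ B.filter (fun b => b ∈ closedBall a r),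
        ∑ k ∈ range (j + 1), (j.choose k : R) * (b - a) ^ (j - k) * N b k)
    (hT : ∀ k ≤ n, ∀ x ∈ S, ∀ y ∈ S, ‖x - y‖ ≤ r →
      ‖D k x - taylorPoly D n k y x‖ ≤ ε * ‖x - y‖ ^ (n - k))
    (hN : ∀ b ∈ S, ∀ k ≤ n, ‖N b k‖ ≤ C * ρ ^ ((k : ℤ) - n)) :
    ‖∑ b ∈ B, ∑ j ∈ range (n + 1), D j b * N b j
      - ∑ a ∈ A, ∑ j ∈ range (n + 1), D j a * M a j‖ ≤ ε * (max C 0 * c ^ n) := by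
  have hBS : ∀ b ∈ B, b ∈ S := fun b hb =>
    hB ▸ Set.mem_iUnion₂.2 ⟨b, hb, mem_closedBall_self hρ.le⟩
  have hsplit := sum_eq_sum_sum_filter_mem (U := (closedBall · r))
    (fun b hb => by simpa [hA] using hBS b hb) (fun a ha a' ha' => hdisj a ha a' ha')
    (fun b => ∑ j ∈ range (n + 1), D j b * N b j)
  have hexpand : ∀ a ∈ A, ∑ j ∈ range (n + 1), D j a * M a j
      = ∑ b ∈ B.filter (fun b => b ∈ closedBall a r), ∑ j ∈ range (n + 1), D j a *
          ∑ k ∈ range (j + 1), (j.choose k : R) * (b - a) ^ (j - k) * N b k := by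
    intro a ha
    rw [sum_comm]
    exact sum_congr rfl fun j hj => by
      rw [hadd a ha j (Nat.lt_succ_iff.mp (mem_range.mp hj)), mul_sum]
  rw [hsplit, sum_congr rfl hexpand, ← sum_sub_distrib]
  refine IsUltrametricDist.norm_sum_le_of_forall_le_of_nonneg (by positivity) fun a ha => ?_
  rw [← sum_sub_distrib]
  refine IsUltrametricDist.norm_sum_le_of_forall_le_of_nonneg (by positivity) fun b hb => ?_
  obtain ⟨hbB, hba⟩ := mem_filter.mp hb
  have haS : a ∈ S := hA ▸ Set.mem_iUnion₂.2
    ⟨a, ha, mem_closedBall_self (dist_nonneg.trans (mem_closedBall.mp hba))⟩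
  rw [mem_closedBall, dist_eq_norm] at hba
  rw [norm_sub_rev]
  exact norm_sum_mul_recenter_sub_le (fun _ _ => rfl)
    (fun k hk => hT k hk b (hBS b hbB) a haS hba) (hN b (hBS b hbB)) hε hρ hc (hba.trans hrρ)

end Ultrametric

/-- `mom l a j` stands for `∫_{B(a,‖π‖^l)} (x-a)^j dμ` and `D j` for the `j`-th hyperderivative. -/
theorem stmt8_general (L : Type*) [NontriviallyNormedField L] [IsUltrametricDist L] [CompleteSpace L]
    (π : L) (hπ0 : π ≠ 0) (hπ : ‖π‖ < 1)
    (S : Set L)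
    (l₀ : ℕ) (A : ℕ → Finset L)
    (hcover : ∀ l, l₀ ≤ l → S = ⋃ a ∈ A l, Metric.closedBall a (‖π‖ ^ l))
    (hdisj : ∀ l, l₀ ≤ l → ∀ a ∈ A l, ∀ b ∈ A l, a ≠ b →
      Disjoint (Metric.closedBall a (‖π‖ ^ l)) (Metric.closedBall b (‖π‖ ^ l)))
    (h : ℕ) (Cμ : ℝ)
    (mom : ℕ → L → ℕ → L)
    (hbound : ∀ l, l₀ ≤ l → ∀ a ∈ S, ∀ j ≤ h,
      ‖mom l a j‖ ≤ Cμ * (‖π‖ ^ l) ^ ((j : ℤ) - (h : ℤ)))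
    (hrecenter : ∀ l, l₀ ≤ l → ∀ a b : L, ‖b - a‖ ≤ ‖π‖ ^ l → ∀ j ≤ h,
      mom l a j = ∑ k ∈ Finset.range (j + 1),
        (Nat.choose j k : L) * (b - a) ^ (j - k) * mom l b k)
    (hadd : ∀ l, l₀ ≤ l → ∀ a ∈ A l, ∀ j ≤ h,
      mom l a j = ∑ b ∈ (A (l + 1)).filter (fun b => b ∈ Metric.closedBall a (‖π‖ ^ l)),
        ∑ k ∈ Finset.range (j + 1),
          (Nat.choose j k : L) * (b - a) ^ (j - k) * mom (l + 1) b k)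
    (D : ℕ → L → L)
    (hTaylor : ∀ k ≤ h, ∀ ε > (0 : ℝ), ∃ δ > (0 : ℝ), ∀ x ∈ S, ∀ y ∈ S, ‖x - y‖ ≤ δ →
      ‖D k x - ∑ j ∈ Finset.range (h - k + 1),
          (Nat.choose (j + k) k : L) * (x - y) ^ j * D (j + k) y‖ ≤ ε * ‖x - y‖ ^ (h - k)) :
    ∃ I : L, ∀ sample : ℕ → L → L,
      (∀ l, l₀ ≤ l → ∀ a ∈ A l, sample l a ∈ Metric.closedBall a (‖π‖ ^ l)) →
      Filter.Tendsto
        (fun l => ∑ a ∈ A l, ∑ j ∈ Finset.range (h + 1),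
          D j (sample l a) * mom l (sample l a) j)
        Filter.atTop (nhds I) := by
  have hπpos : 0 < ‖π‖ := norm_pos_iff.mpr hπ0
  have hradius : Tendsto (fun l : ℕ => ‖π‖ ^ l) atTop (𝓝 0) :=
    tendsto_pow_atTop_nhds_zero_of_lt_one hπpos.le hπ
  set R : ℕ → L := fun l => ∑ a ∈ A l, ∑ j ∈ range (h + 1), D j a * mom l a j
  have hstep : Tendsto (fun l => R (l + 1) - R l) atTop (𝓝 0) := by
    refine tendsto_zero_of_forall_eventually_norm_le_mul (max Cμ 0 * ‖π‖⁻¹ ^ h) fun ε hε => ?_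
    filter_upwards [eventually_ge_atTop l₀,
      eventually_norm_sub_taylorPoly_le hradius hTaylor hε] with l hl hT
    exact norm_riemannSum_refine_sub_le hε.le (by positivity) (one_le_inv₀ hπpos |>.2 hπ.le)
      (by rw [pow_succ', inv_mul_cancel_left₀ hπpos.ne']) (hcover l hl)
      (hcover (l + 1) (hl.trans l.le_succ)) (hdisj l hl) (hadd l hl) hT
      (hbound (l + 1) (hl.trans l.le_succ))
  obtain ⟨I, hI⟩ := cauchySeq_tendsto_of_complete
    (NonarchimedeanAddGroup.cauchySeq_of_tendsto_sub_nhds_zero hstep)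
  refine ⟨I, fun sample hsample => ?_⟩
  have hsampled : Tendsto (fun l => ∑ a ∈ A l, ∑ j ∈ range (h + 1),
      D j (sample l a) * mom l (sample l a) j - R l) atTop (𝓝 0) := by
    refine tendsto_zero_of_forall_eventually_norm_le_mul (max Cμ 0) fun ε hε => ?_
    filter_upwards [eventually_ge_atTop l₀,
      eventually_norm_sub_taylorPoly_le hradius hTaylor hε] with l hl hT
    exact norm_riemannSum_sub_le hε.le (by positivity) (hcover l hl) (hsample l hl)
      (hrecenter l hl) hT (hbound l hl)
  simpa using hI.add hsampled

/-- Riemann sums of a `C^h` function against an `h`-admissible measure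
converge, with limit independent of the sample points.  Here `L` is a complete
nonarchimedean field (containing both the compact open set `S` and the values),
`mom l a j` stands for `∫_{B(a,‖π‖^l)} (x-a)^j dμ`, subject to the `h`-admissibility
bound, finite additivity over refinement, and binomial re-centering; `D j` are the
hyperderivatives of `f = D 0`, subject to the `C^h` Taylor property. -/
theorem stmt8 (L : Type*) [NontriviallyNormedField L] [IsUltrametricDist L] [CompleteSpace L]
    (π : L) (hπ0 : π ≠ 0) (hπ : ‖π‖ < 1)
    (S : Set L) (hSopen : IsOpen S) (hScpt : IsCompact S)
    (l₀ : ℕ) (A : ℕ → Finset L)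
    (hcover : ∀ l, l₀ ≤ l → S = ⋃ a ∈ A l, Metric.closedBall a (‖π‖ ^ l))
    (hdisj : ∀ l, l₀ ≤ l → ∀ a ∈ A l, ∀ b ∈ A l, a ≠ b →
      Disjoint (Metric.closedBall a (‖π‖ ^ l)) (Metric.closedBall b (‖π‖ ^ l)))
    (h : ℕ) (Cμ : ℝ)
    (mom : ℕ → L → ℕ → L)
    (hbound : ∀ l, l₀ ≤ l → ∀ a ∈ S, ∀ j ≤ h,
      ‖mom l a j‖ ≤ Cμ * (‖π‖ ^ l) ^ ((j : ℤ) - (h : ℤ)))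
    (hrecenter : ∀ l, l₀ ≤ l → ∀ a b : L, ‖b - a‖ ≤ ‖π‖ ^ l → ∀ j ≤ h,
      mom l a j = ∑ k ∈ Finset.range (j + 1),
        (Nat.choose j k : L) * (b - a) ^ (j - k) * mom l b k)
    (hadd : ∀ l, l₀ ≤ l → ∀ a ∈ A l, ∀ j ≤ h,
      mom l a j = ∑ b ∈ (A (l + 1)).filter (fun b => b ∈ Metric.closedBall a (‖π‖ ^ l)),
        ∑ k ∈ Finset.range (j + 1),
          (Nat.choose j k : L) * (b - a) ^ (j - k) * mom (l + 1) b k)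
    (f : L → L) (D : ℕ → L → L) (hD0 : D 0 = f)
    (hTaylor : ∀ k ≤ h, ∀ ε > (0 : ℝ), ∃ δ > (0 : ℝ), ∀ x ∈ S, ∀ y ∈ S, ‖x - y‖ ≤ δ →
      ‖D k x - ∑ j ∈ Finset.range (h - k + 1),
          (Nat.choose (j + k) k : L) * (x - y) ^ j * D (j + k) y‖ ≤ ε * ‖x - y‖ ^ (h - k)) :
    ∃ I : L, ∀ sample : ℕ → L → L,
      (∀ l, l₀ ≤ l → ∀ a ∈ A l, sample l a ∈ Metric.closedBall a (‖π‖ ^ l)) →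
      Filter.Tendsto
        (fun l => ∑ a ∈ A l, ∑ j ∈ Finset.range (h + 1),
          D j (sample l a) * mom l (sample l a) j)
        Filter.atTop (nhds I) :=
  stmt8_general L π hπ0 hπ S l₀ A hcover hdisj h Cμ mom hbound hrecenter hadd D hTaylor
end
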